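/- arXiv:math/0110287 — 6 statements merged into one kernel-verified Lean document; each statement's English description precedes it below -/
import Mathlib

section
/- Let a group G act by uniform isomorphisms on metric spaces X and Y, and let i : X → Y be a uniformly continuous equivariant map with dense image. If the G-space X has the concentration property, then so does Y. -/
/- The cover of `Y` pulls back along `i` to a cover of `X`, one of whose members `i ⁻¹' A` is
essential. A uniformly continuous equivariant map carries essential sets to essential sets:
it maps a `δ`-neighbourhood into an `ε`-neighbourhood and commutes with the translations. Hence
`i '' (i ⁻¹' A) ⊆ A` is essential, and so is `A`. -/

open Metric Pointwise

/-- A subset `A` of a metric `G`-space `X` is essential if for every `ε > 0` and every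
finite collection of group elements, the translates of the `ε`-neighbourhood of `A`
have a common point. -/
def Essential (G : Type*) {X : Type*} [Group G] [PseudoMetricSpace X] [MulAction G X]
    (A : Set X) : Prop :=
  ∀ ε > (0 : ℝ), ∀ T : Finset G, (⋂ g ∈ T, g • thickening ε A).Nonempty

/-- A metric `G`-space has the concentration property if every finite cover
contains an essential set. -/
def ConcProp (G : Type*) (X : Type*) [Group G] [PseudoMetricSpace X] [MulAction G X] :
    Prop :=
  ∀ C : Finset (Set X), ⋃₀ (C : Set (Set X)) = Set.univ → ∃ A ∈ C, Essential G A

section Essential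

variable {G X Y : Type*} [Group G] [PseudoMetricSpace X] [PseudoMetricSpace Y]
  [MulAction G X] [MulAction G Y]

theorem Essential.mono {A B : Set X} (hA : Essential G A) (hAB : A ⊆ B) : Essential G B :=
  fun ε hε T => (hA ε hε T).mono <| Set.biInter_mono subset_rfl fun _ _ =>
    Set.smul_set_mono (thickening_subset_of_subset ε hAB)

theorem image_thickening_subset_thickening_image {f : X → Y} {δ ε : ℝ}
    (hf : ∀ ⦃x y⦄, dist x y < δ → dist (f x) (f y) < ε) (A : Set X) :
    f '' thickening δ A ⊆ thickening ε (f '' A) := by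
  rintro _ ⟨x, hx, rfl⟩
  obtain ⟨a, ha, hxa⟩ := mem_thickening_iff.mp hx
  exact mem_thickening_iff.mpr ⟨f a, Set.mem_image_of_mem f ha, hf hxa⟩

theorem Essential.image {f : X → Y} (hf : UniformContinuous f)
    (hequiv : ∀ (g : G) (x : X), f (g • x) = g • f x) {A : Set X} (hA : Essential G A) :
    Essential G (f '' A) := by
  intro ε hε T
  obtain ⟨δ, hδ, hδε⟩ := Metric.uniformContinuous_iff.mp hf ε hε
  obtain ⟨x, hx⟩ := hA δ hδ T
  refine ⟨f x, Set.mem_iInter₂.mpr fun g hg => ?_⟩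
  obtain ⟨z, hz, rfl⟩ := Set.mem_iInter₂.mp hx g hg
  rw [hequiv]
  exact Set.smul_mem_smul_set
    (image_thickening_subset_thickening_image hδε A ⟨z, hz, rfl⟩)

theorem ConcProp.exists_essential_preimage {Z : Type*} (h : ConcProp G X) (f : X → Z)
    {C : Finset (Set Z)} (hC : ⋃₀ (C : Set (Set Z)) = Set.univ) :
    ∃ A ∈ C, Essential G (f ⁻¹' A) := by
  classical
  have hcover : ⋃₀ ((C.image (f ⁻¹' ·) : Finset (Set X)) : Set (Set X)) = Set.univ := by
    rw [Finset.coe_image, Set.sUnion_image, ← Set.preimage_iUnion₂, ← Set.sUnion_eq_biUnion, hC,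
      Set.preimage_univ]
  obtain ⟨_, hA', hess⟩ := h _ hcover
  obtain ⟨A, hA, rfl⟩ := Finset.mem_image.mp hA'
  exact ⟨A, hA, hess⟩

end Essential

theorem concProp_of_image_general {G X Y : Type*} [Group G] [MetricSpace X] [MetricSpace Y]
    [MulAction G X] [MulAction G Y]
    (i : X → Y) (hi : UniformContinuous i)
    (hequiv : ∀ (g : G) (x : X), i (g • x) = g • i x)
    (hconc : ConcProp G X) : ConcProp G Y := by
  intro C hC
  obtain ⟨A, hA, hess⟩ := hconc.exists_essential_preimage i hC
  exact ⟨A, hA, (hess.image hi hequiv).mono (Set.image_preimage_subset i A)⟩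

/-- If `G` acts by uniform isomorphisms on metric spaces `X` and `Y`, and
`i : X → Y` is a uniformly continuous equivariant map with dense image, then the
concentration property passes from `X` to `Y`. -/
theorem concProp_of_image {G X Y : Type*} [Group G] [MetricSpace X] [MetricSpace Y]
    [MulAction G X] [MulAction G Y]
    (hX : ∀ g : G, UniformContinuous (fun x : X => g • x))
    (hY : ∀ g : G, UniformContinuous (fun y : Y => g • y))
    (i : X → Y) (hi : UniformContinuous i)
    (hequiv : ∀ (g : G) (x : X), i (g • x) = g • i x)
    (hdense : DenseRange i)
    (hconc : ConcProp G X) : ConcProp G Y :=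
  concProp_of_image_general i hi hequiv hconc
end

section
/- A compact metric G-space K has the concentration property if and only if K contains a G-fixed point, i.e., a point κ with g·κ = κ for all g ∈ G. -/
/-!
If `κ` is fixed, the member of a cover containing `κ` is essential, with `κ` itself as the common
point. Conversely, cover `K` by finitely many `ε/4`-balls: the thickening of an essential ball
contains a point `y` whose translates by any finite `T ⊆ G` stay in it, so `y` is moved less than
`ε` by every `g ∈ T`. On a compact space the total displacement `∑ g ∈ T, dist (g • x) x` then
attains the value `0`, so every finite `T` has a common fixed point, and the closed sets of common
fixed points of finite `T` have the finite intersection property.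
-/

open Metric Pointwise

section

variable {G X : Type*} [Group G] [PseudoMetricSpace X] [MulAction G X]

theorem essential_of_fixed_mem {A : Set X} {κ : X} (hκ : ∀ g : G, g • κ = κ) (hκA : κ ∈ A) :
    Essential G A := fun ε hε _ =>
  ⟨κ, Set.mem_iInter₂.2 fun g _ => by
    rw [Set.mem_smul_set_iff_inv_smul_mem, hκ g⁻¹]
    exact self_subset_thickening hε A hκA⟩

theorem concProp_of_fixed {κ : X} (hκ : ∀ g : G, g • κ = κ) : ConcProp G X := by
  intro C hC
  obtain ⟨A, hA, hκA⟩ : κ ∈ ⋃₀ (C : Set (Set X)) := hC ▸ Set.mem_univ κ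
  exact ⟨A, hA, essential_of_fixed_mem hκ hκA⟩

/-- Testing essentiality against `T⁻¹ ∪ {1}` gives a point of the thickening that `T` keeps
inside it. -/
theorem Essential.exists_smul_mem_thickening {A : Set X} (hA : Essential G A) {ε : ℝ}
    (hε : 0 < ε) (T : Finset G) :
    ∃ y ∈ thickening ε A, ∀ g ∈ T, g • y ∈ thickening ε A := by
  classical
  obtain ⟨y, hy⟩ := hA ε hε (insert 1 (T.image (·⁻¹)))
  rw [Set.mem_iInter₂] at hy
  refine ⟨y, by simpa using hy 1 (Finset.mem_insert_self _ _), fun g hg => ?_⟩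
  rw [← Set.mem_inv_smul_set_iff]
  exact hy g⁻¹ (Finset.mem_insert_of_mem (Finset.mem_image_of_mem _ hg))

theorem ConcProp.exists_dist_smul_lt [CompactSpace X] (hC : ConcProp G X) {ε : ℝ} (hε : 0 < ε)
    (T : Finset G) : ∃ x : X, ∀ g ∈ T, dist (g • x) x < ε := by
  classical
  have hδ : 0 < ε / 4 := by positivity
  obtain ⟨s, hs⟩ := isCompact_univ.elim_finite_subcover (fun x : X => ball x (ε / 4))
    (fun _ => isOpen_ball) fun x _ => Set.mem_iUnion.2 ⟨x, mem_ball_self hδ⟩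
  have hcover : ⋃₀ ((s.image (ball · (ε / 4)) : Finset (Set X)) : Set (Set X)) = Set.univ := by
    simpa [Set.sUnion_image, Set.eq_univ_iff_forall] using fun x => Set.mem_iUnion₂.1 (hs trivial)
  obtain ⟨A, hA, hess⟩ := hC _ hcover
  obtain ⟨x₀, -, rfl⟩ := Finset.mem_image.1 hA
  obtain ⟨y, hy, hTy⟩ := hess.exists_smul_mem_thickening hδ T
  have hnear : ∀ z ∈ thickening (ε / 4) (ball x₀ (ε / 4)), dist z x₀ < ε / 2 := fun z hz => by
    have := thickening_ball x₀ (ε / 4) (ε / 4) hz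
    rw [mem_ball] at this
    linarith
  refine ⟨y, fun g hg => ?_⟩
  calc dist (g • y) y ≤ dist (g • y) x₀ + dist y x₀ := dist_triangle_right _ _ _
    _ < ε / 2 + ε / 2 := add_lt_add (hnear _ (hTy g hg)) (hnear y hy)
    _ = ε := add_halves ε

end

section

variable {G X : Type*} [Group G] [MulAction G X]

theorem exists_forall_smul_eq_of_forall_dist_smul_lt [MetricSpace X] [CompactSpace X]
    [ContinuousConstSMul G X] (T : Finset G) (h : ∀ ε > 0, ∃ x : X, ∀ g ∈ T, dist (g • x) x < ε) :
    ∃ x : X, ∀ g ∈ T, g • x = x := by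
  have : Nonempty X := (h 1 one_pos).nonempty
  let f : X → ℝ := fun x => ∑ g ∈ T, dist (g • x) x
  obtain ⟨x₀, -, hx₀⟩ := isCompact_univ.exists_isMinOn Set.univ_nonempty
    (by fun_prop : Continuous f).continuousOn
  have hf : f x₀ ≤ 0 := by
    refine le_of_forall_pos_lt_add fun ε hε => ?_
    obtain ⟨x, hx⟩ := h (ε / (T.card + 1)) (by positivity)
    calc f x₀ ≤ f x := hx₀ (Set.mem_univ x)
      _ ≤ T.card • (ε / (T.card + 1)) := Finset.sum_le_card_nsmul _ _ _ fun g hg => (hx g hg).le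
      _ < 0 + ε := by
        rw [nsmul_eq_mul, zero_add, mul_div_assoc', div_lt_iff₀ (by positivity)]
        nlinarith
  have := (Finset.sum_eq_zero_iff_of_nonneg fun g _ => dist_nonneg).1
    (le_antisymm hf (Finset.sum_nonneg fun g _ => dist_nonneg))
  exact ⟨x₀, fun g hg => dist_eq_zero.1 (this g hg)⟩

theorem exists_forall_smul_eq_of_forall_finset [TopologicalSpace X] [T2Space X] [CompactSpace X]
    [ContinuousConstSMul G X] (h : ∀ T : Finset G, ∃ x : X, ∀ g ∈ T, g • x = x) :
    ∃ x : X, ∀ g : G, g • x = x := by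
  classical
  let F : Finset G → Set X := fun T => ⋂ g ∈ T, {x | g • x = x}
  have hF : ∀ T, IsClosed (F T) := fun T =>
    isClosed_biInter fun g _ => isClosed_eq (continuous_const_smul g) continuous_id
  have hdir : Directed (· ⊇ ·) F :=
    directed_of_isDirected_le fun _ _ hST => Set.biInter_subset_biInter_left hST
  obtain ⟨x, hx⟩ := IsCompact.nonempty_iInter_of_directed_nonempty_isCompact_isClosed F hdir
    (fun T => by simpa [F, Set.Nonempty] using h T) (fun T => (hF T).isCompact) hF
  exact ⟨x, fun g => by simpa [F] using Set.mem_iInter.1 hx {g}⟩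

end

/-- A compact metric `G`-space (with `G` acting by uniformly continuous maps) has the
concentration property if and only if it has a `G`-fixed point. -/
theorem concProp_iff_fixed_point {G K : Type*} [Group G] [MetricSpace K]
    [CompactSpace K] [MulAction G K]
    (hG : ∀ g : G, UniformContinuous (fun x : K => g • x)) :
    ConcProp G K ↔ ∃ κ : K, ∀ g : G, g • κ = κ := by
  have : ContinuousConstSMul G K := ⟨fun g => (hG g).continuous⟩
  refine ⟨fun hC => ?_, fun ⟨κ, hκ⟩ => concProp_of_fixed hκ⟩
  exact exists_forall_smul_eq_of_forall_finset fun T =>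
    exists_forall_smul_eq_of_forall_dist_smul_lt T fun _ hε => hC.exists_dist_smul_lt hε T
end

section
/- The unit sphere S^∞ of the infinite-dimensional separable Hilbert space ℓ₂, with the action of the unitary group U(ℓ₂), does not have the concentration property: the sets A = {x ∈ S^∞ : ‖P_E x‖ ≥ √2/2} and B = {x ∈ S^∞ : ‖P_E x‖ ≤ √2/2}, where P_E is the orthogonal projection onto the span of even-indexed basis vectors, form a cover of S^∞ in which both sets are inessential. -/
open Classical Metric

/-- The norm of the orthogonal projection of `x ∈ ℓ₂` onto the closed span of the
even-indexed basis vectors. -/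
noncomputable def PEnorm (x : lp (fun _ : ℕ => ℝ) 2) : ℝ :=
  Real.sqrt (∑' i : ℕ, if Even i then (x i) ^ 2 else 0)

/-- `A ⊆ S` is essential in `S` (for the action of the unitary group of `ℓ₂` on the
unit sphere `S`) if for every `ε > 0` and every finite family of unitaries, the
translates of the `ε`-neighbourhood of `A` in `S` have a common point. -/
def EssentialIn (S A : Set (lp (fun _ : ℕ => ℝ) 2)) : Prop :=
  ∀ ε > (0 : ℝ),
    ∀ T : Finset ((lp (fun _ : ℕ => ℝ) 2) ≃ₗᵢ[ℝ] (lp (fun _ : ℕ => ℝ) 2)),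
      (⋂ g ∈ T, (g : (lp (fun _ : ℕ => ℝ) 2) → (lp (fun _ : ℕ => ℝ) 2)) ''
        (thickening ε A ∩ S)).Nonempty

noncomputable section AuxDevelopment

abbrev Hsp := lp (fun _ : ℕ => ℝ) 2

lemma rpow2 (a : ℝ) : a ^ ((2 : ENNReal)).toReal = a ^ 2 := by
  rw [show ((2:ENNReal)).toReal = ((2:ℕ):ℝ) by norm_num, Real.rpow_natCast]

lemma sq_summable (x : Hsp) : Summable (fun i => (x i)^2) := by
  have h := (memℓp_gen_iff (p := 2) (by norm_num)).1 (lp.memℓp x)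
  simp only [rpow2, Real.norm_eq_abs, sq_abs] at h
  exact h

lemma norm_sq_eq (x : Hsp) : ‖x‖^2 = ∑' i, (x i)^2 := by
  have h := lp.norm_rpow_eq_tsum (p := 2) (by norm_num) x
  simp only [rpow2, Real.norm_eq_abs, sq_abs] at h
  exact h

/-- Square of the "partial norm" over a coordinate set `K`. -/
def PnSq (K : Set ℕ) (x : Hsp) : ℝ := ∑' i, K.indicator (fun i => (x i)^2) i

/-- The "partial norm" over a coordinate set `K`. -/
def Pn (K : Set ℕ) (x : Hsp) : ℝ := Real.sqrt (PnSq K x)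

lemma ind_summable (K : Set ℕ) (x : Hsp) :
    Summable (K.indicator (fun i => (x i)^2)) := by
  refine Summable.of_nonneg_of_le ?_ ?_ (sq_summable x)
  · intro i; exact Set.indicator_nonneg (fun i _ => sq_nonneg _) i
  · intro i; by_cases h : i ∈ K <;> simp [Set.indicator_apply, h, sq_nonneg]

lemma PnSq_nonneg (K : Set ℕ) (x : Hsp) : 0 ≤ PnSq K x :=
  tsum_nonneg fun i => Set.indicator_nonneg (fun i _ => sq_nonneg _) i

lemma Pn_nonneg (K : Set ℕ) (x : Hsp) : 0 ≤ Pn K x := Real.sqrt_nonneg _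

lemma Pn_sq (K : Set ℕ) (x : Hsp) : (Pn K x)^2 = PnSq K x :=
  Real.sq_sqrt (PnSq_nonneg K x)

lemma PnSq_le_norm_sq (K : Set ℕ) (x : Hsp) : PnSq K x ≤ ‖x‖^2 := by
  rw [norm_sq_eq]
  refine Summable.tsum_le_tsum ?_ (ind_summable K x) (sq_summable x)
  intro i; by_cases h : i ∈ K <;> simp [Set.indicator_apply, h, sq_nonneg]

lemma PnSq_mono {K K' : Set ℕ} (h : K ⊆ K') (x : Hsp) : PnSq K x ≤ PnSq K' x := by
  refine Summable.tsum_le_tsum ?_ (ind_summable K x) (ind_summable K' x)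
  intro i
  by_cases hi : i ∈ K
  · simp [Set.indicator_apply, hi, h hi]
  · simp only [Set.indicator_apply, if_neg hi]
    by_cases hi' : i ∈ K' <;> simp [hi', sq_nonneg]

lemma Pn_mono {K K' : Set ℕ} (h : K ⊆ K') (x : Hsp) : Pn K x ≤ Pn K' x :=
  Real.sqrt_le_sqrt (PnSq_mono h x)

lemma Pn_le_norm (K : Set ℕ) (x : Hsp) : Pn K x ≤ ‖x‖ := by
  have := Real.sqrt_le_sqrt (PnSq_le_norm_sq K x)
  rwa [Real.sqrt_sq (norm_nonneg x)] at this

/-- Coordinate projection onto a set of coordinates, as an element of `ℓ₂`. -/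
def projP (K : Set ℕ) (x : Hsp) : Hsp :=
  ⟨fun i => K.indicator (fun i => x i) i, by
    apply memℓp_gen (p := 2)
    simp only [rpow2]
    refine Summable.of_nonneg_of_le (fun i => by positivity) ?_ (sq_summable x)
    intro i; by_cases h : i ∈ K <;> simp [Set.indicator_apply, h, sq_abs, sq_nonneg]⟩

lemma projP_apply (K : Set ℕ) (x : Hsp) (i : ℕ) :
    (projP K x) i = K.indicator (fun i => x i) i := rfl

lemma Pn_eq_norm_projP (K : Set ℕ) (x : Hsp) : Pn K x = ‖projP K x‖ := by
  have h : PnSq K x = ‖projP K x‖^2 := by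
    rw [norm_sq_eq]
    refine tsum_congr fun i => ?_
    by_cases hi : i ∈ K <;> simp [projP_apply, Set.indicator_apply, hi]
  rw [Pn, h, Real.sqrt_sq (norm_nonneg _)]

lemma projP_sub (K : Set ℕ) (x y : Hsp) : projP K x - projP K y = projP K (x - y) := by
  apply lp.ext
  funext i
  simp only [lp.coeFn_sub, Pi.sub_apply, projP_apply]
  by_cases hi : i ∈ K <;> simp [Set.indicator_apply, hi, lp.coeFn_sub]

lemma Pn_lipschitz (K : Set ℕ) (x y : Hsp) : |Pn K x - Pn K y| ≤ ‖x - y‖ := by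
  rw [Pn_eq_norm_projP, Pn_eq_norm_projP]
  calc |‖projP K x‖ - ‖projP K y‖| ≤ ‖projP K x - projP K y‖ := abs_norm_sub_norm_le _ _
    _ = ‖projP K (x - y)‖ := by rw [projP_sub]
    _ ≤ ‖x - y‖ := by rw [← Pn_eq_norm_projP]; exact Pn_le_norm _ _

/-- The map `x ↦ x ∘ τ` on `ℓ₂`, for a permutation `τ` of the coordinates. -/
def permMap (τ : ℕ ≃ ℕ) (x : Hsp) : Hsp :=
  ⟨fun i => x (τ i), by
    apply memℓp_gen (p := 2)
    simp only [rpow2, Real.norm_eq_abs, sq_abs]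
    exact (Equiv.summable_iff τ (f := fun i => (x i)^2)).2 (sq_summable x)⟩

lemma permMap_apply (τ : ℕ ≃ ℕ) (x : Hsp) (i : ℕ) : (permMap τ x) i = x (τ i) := rfl

/-- The unitary of `ℓ₂` induced by a permutation `σ` of the coordinates
(sending `e_n` to `e_{σ n}`). -/
def permIso (σ : ℕ ≃ ℕ) : Hsp ≃ₗᵢ[ℝ] Hsp where
  toFun := permMap σ.symm
  invFun := permMap σ
  map_add' x y := by
    apply lp.ext; funext i
    simp [permMap_apply, lp.coeFn_add]
  map_smul' c x := by
    apply lp.ext; funext i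
    simp [permMap_apply, lp.coeFn_smul]
  left_inv x := by
    apply lp.ext; funext i
    simp [permMap_apply]
  right_inv x := by
    apply lp.ext; funext i
    simp [permMap_apply]
  norm_map' x := by
    rw [lp.norm_eq_tsum_rpow (by norm_num), lp.norm_eq_tsum_rpow (by norm_num)]
    congr 1
    exact σ.symm.tsum_eq (fun i => ‖x i‖ ^ ((2:ENNReal)).toReal)

lemma permIso_apply (σ : ℕ ≃ ℕ) (x : Hsp) (i : ℕ) : (permIso σ x) i = x (σ.symm i) := rfl

lemma PnSq_perm (K : Set ℕ) (σ : ℕ ≃ ℕ) (x : Hsp) :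
    PnSq K (permIso σ x) = PnSq (σ ⁻¹' K) x := by
  unfold PnSq
  rw [← Equiv.tsum_eq σ (fun i => K.indicator (fun i => ((permIso σ x) i)^2) i)]
  refine tsum_congr fun j => ?_
  by_cases h : σ j ∈ K <;>
    simp [permIso_apply, Set.indicator_apply, h, Set.mem_preimage]

lemma Pn_perm (K : Set ℕ) (σ : ℕ ≃ ℕ) (x : Hsp) :
    Pn K (permIso σ x) = Pn (σ ⁻¹' K) x := by
  unfold Pn; rw [PnSq_perm]

lemma PnSq_three_le (x : Hsp) :
    PnSq {m | m % 4 = 1} x + PnSq {m | m % 4 = 2} x + PnSq {m | m % 4 = 3} x ≤ ‖x‖^2 := by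
  rw [norm_sq_eq, PnSq, PnSq, PnSq,
    ← Summable.tsum_add (ind_summable _ x) (ind_summable _ x),
    ← Summable.tsum_add ((ind_summable _ x).add (ind_summable _ x)) (ind_summable _ x)]
  refine Summable.tsum_le_tsum ?_ (((ind_summable _ x).add (ind_summable _ x)).add (ind_summable _ x))
    (sq_summable x)
  intro i
  simp only [Pi.add_apply, Set.indicator_apply, Set.mem_setOf_eq]
  split_ifs <;> first | omega | linarith [sq_nonneg ((x : ∀ _ : ℕ, ℝ) i)]

lemma PEnorm_eq_Pn (x : Hsp) : PEnorm x = Pn {i | Even i} x := by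
  unfold PEnorm Pn PnSq
  congr 1
  refine tsum_congr fun i => ?_
  by_cases h : Even i <;> simp [Set.indicator_apply, h]

section Perms

def mkPerm (r : ℕ) (g : ℕ → ℕ) : ℕ → ℕ := fun n =>
  if n % 2 = 0 then 2 * n + r else 4 * (n / 2 / 3) + g (n / 2 % 3)

def mkPermInv (r : ℕ) (gi : ℕ → ℕ) : ℕ → ℕ := fun m =>
  if m % 4 = r then (m - r) / 2 else 2 * (3 * (m / 4) + gi (m % 4)) + 1

lemma mkPerm_left (r : ℕ) (g gi : ℕ → ℕ) (hr : r < 4)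
    (hg : ∀ j, j < 3 → g j < 4 ∧ g j ≠ r ∧ gi (g j) = j) :
    Function.LeftInverse (mkPermInv r gi) (mkPerm r g) := by
  intro n
  by_cases h : n % 2 = 0
  · simp only [mkPerm, mkPermInv, if_pos h]
    rw [if_pos (show (2 * n + r) % 4 = r by omega)]
    omega
  · simp only [mkPerm, mkPermInv, if_neg h]
    obtain ⟨h1, h2, h3⟩ := hg (n / 2 % 3) (by omega)
    rw [show (4 * (n / 2 / 3) + g (n / 2 % 3)) % 4 = g (n / 2 % 3) by omega]
    rw [if_neg h2, show (4 * (n / 2 / 3) + g (n / 2 % 3)) / 4 = n / 2 / 3 by omega, h3]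
    omega

lemma mkPerm_right (r : ℕ) (g gi : ℕ → ℕ) (hr : r < 4)
    (hgi : ∀ s, s < 4 → s ≠ r → gi s < 3 ∧ g (gi s) = s) :
    Function.RightInverse (mkPermInv r gi) (mkPerm r g) := by
  intro m
  by_cases h : m % 4 = r
  · simp only [mkPermInv, mkPerm, if_pos h]
    rw [if_pos (show (m - r) / 2 % 2 = 0 by omega)]
    omega
  · simp only [mkPermInv, mkPerm, if_neg h]
    obtain ⟨h1, h2⟩ := hgi (m % 4) (by omega) h
    rw [if_neg (show ¬ (2 * (3 * (m / 4) + gi (m % 4)) + 1) % 2 = 0 by omega)]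
    rw [show (2 * (3 * (m / 4) + gi (m % 4)) + 1) / 2 = 3 * (m / 4) + gi (m % 4) by omega]
    rw [show (3 * (m / 4) + gi (m % 4)) / 3 = m / 4 by omega,
        show (3 * (m / 4) + gi (m % 4)) % 3 = gi (m % 4) by omega, h2]
    omega

def mkEquiv (r : ℕ) (g gi : ℕ → ℕ) (hr : r < 4)
    (hg : ∀ j, j < 3 → g j < 4 ∧ g j ≠ r ∧ gi (g j) = j)
    (hgi : ∀ s, s < 4 → s ≠ r → gi s < 3 ∧ g (gi s) = s) : ℕ ≃ ℕ :=
  ⟨mkPerm r g, mkPermInv r gi, mkPerm_left r g gi hr hg, mkPerm_right r g gi hr hgi⟩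

lemma mkEquiv_even (r : ℕ) (g gi) (hr) (hg) (hgi) (n : ℕ) (h : n % 2 = 0) :
    (mkEquiv r g gi hr hg hgi) n % 4 = r := by
  simp only [mkEquiv, Equiv.coe_fn_mk, mkPerm, if_pos h]
  omega

def perm1 : ℕ ≃ ℕ :=
  mkEquiv 1 (fun j => if j = 0 then 0 else j + 1) (fun s => if s = 0 then 0 else s - 1)
    (by norm_num)
    (by intro j hj; interval_cases j <;> norm_num)
    (by intro s hs hne; interval_cases s <;> simp_all)

def perm2 : ℕ ≃ ℕ :=
  mkEquiv 2 (fun j => if j = 2 then 3 else j) (fun s => if s = 3 then 2 else s)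
    (by norm_num)
    (by intro j hj; interval_cases j <;> norm_num)
    (by intro s hs hne; interval_cases s <;> simp_all)

def perm3 : ℕ ≃ ℕ :=
  mkEquiv 3 (fun j => j) (fun s => s)
    (by norm_num)
    (by intro j hj; interval_cases j <;> norm_num)
    (by intro s hs hne; interval_cases s <;> simp_all)

lemma perm1_even (n : ℕ) (h : n % 2 = 0) : perm1 n % 4 = 1 := mkEquiv_even _ _ _ _ _ _ n h
lemma perm2_even (n : ℕ) (h : n % 2 = 0) : perm2 n % 4 = 2 := mkEquiv_even _ _ _ _ _ _ n h
lemma perm3_even (n : ℕ) (h : n % 2 = 0) : perm3 n % 4 = 3 := mkEquiv_even _ _ _ _ _ _ n h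

def swPerm : ℕ ≃ ℕ :=
  Function.Involutive.toPerm (fun n => if n % 2 = 0 then n + 1 else n - 1) (by
    intro n
    by_cases h : n % 2 = 0
    · simp only [if_pos h]
      rw [if_neg (show ¬ (n + 1) % 2 = 0 by omega)]
      omega
    · simp only [if_neg h]
      rw [if_pos (show (n - 1) % 2 = 0 by omega)]
      omega)

lemma swPerm_odd (n : ℕ) (h : ¬ n % 2 = 0) : swPerm n % 2 = 0 := by
  rw [show swPerm n = (if n % 2 = 0 then n + 1 else n - 1) from rfl, if_neg h]
  omega

end Perms

lemma sqrt2_facts : (Real.sqrt 2)^2 = 2 ∧ 0 ≤ Real.sqrt 2 :=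
  ⟨Real.sq_sqrt (by norm_num), Real.sqrt_nonneg 2⟩

/-- The key computation: a set on which the partial norm over `E` is at least `√2/2`
cannot be essential, given three permutations moving `E` into pairwise disjoint
residue classes mod 4. -/
lemma core_not_essential (E : Set ℕ) (σ₁ σ₂ σ₃ : ℕ ≃ ℕ)
    (h1 : ∀ n ∈ E, σ₁ n % 4 = 1) (h2 : ∀ n ∈ E, σ₂ n % 4 = 2)
    (h3 : ∀ n ∈ E, σ₃ n % 4 = 3)
    (F : Set Hsp) (hF : ∀ a ∈ F, Real.sqrt 2 / 2 ≤ Pn E a) :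
    ¬ EssentialIn (Metric.sphere 0 1) F := by
  intro hEss
  obtain ⟨x, hx⟩ := hEss (1/10) (by norm_num) {permIso σ₁, permIso σ₂, permIso σ₃}
  simp only [Set.mem_iInter] at hx
  have key : ∀ (σ : ℕ ≃ ℕ) (r : ℕ), (∀ n ∈ E, σ n % 4 = r) →
      x ∈ (permIso σ : Hsp → Hsp) '' (thickening (1/10) F ∩ Metric.sphere 0 1) →
      ‖x‖ = 1 ∧ Real.sqrt 2 / 2 - 1/10 ≤ Pn {m | m % 4 = r} x := by
    intro σ r hσ hmem
    obtain ⟨y, ⟨hyt, hys⟩, rfl⟩ := hmem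
    have hy1 : ‖y‖ = 1 := by simpa using mem_sphere_zero_iff_norm.1 hys
    refine ⟨by rw [(permIso σ).norm_map y, hy1], ?_⟩
    obtain ⟨a, haF, hda⟩ := Metric.mem_thickening_iff.1 hyt
    have haP := hF a haF
    have hlip := (abs_le.1 (Pn_lipschitz E y a)).1
    rw [dist_eq_norm] at hda
    have hyE : Real.sqrt 2 / 2 - 1/10 ≤ Pn E y := by linarith
    have hsub : E ⊆ σ ⁻¹' {m | m % 4 = r} := fun n hn => by
      simp [Set.mem_preimage, Set.mem_setOf_eq, hσ n hn]
    have hmono := Pn_mono hsub y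
    rw [Pn_perm]
    linarith
  have m1 := key σ₁ 1 h1 (hx (permIso σ₁) (by simp))
  have m2 := key σ₂ 2 h2 (hx (permIso σ₂) (by simp))
  have m3 := key σ₃ 3 h3 (hx (permIso σ₃) (by simp))
  obtain ⟨hx1, hp1⟩ := m1
  obtain ⟨-, hp2⟩ := m2
  obtain ⟨-, hp3⟩ := m3
  obtain ⟨hs2, hs0⟩ := sqrt2_facts
  have hc0 : (0:ℝ) ≤ Real.sqrt 2 / 2 - 1/10 := by nlinarith
  have hq1 : (Real.sqrt 2 / 2 - 1/10)^2 ≤ (Pn {m | m % 4 = 1} x)^2 := by nlinarith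
  have hq2 : (Real.sqrt 2 / 2 - 1/10)^2 ≤ (Pn {m | m % 4 = 2} x)^2 := by nlinarith
  have hq3 : (Real.sqrt 2 / 2 - 1/10)^2 ≤ (Pn {m | m % 4 = 3} x)^2 := by nlinarith
  have hsum := PnSq_three_le x
  rw [← Pn_sq, ← Pn_sq, ← Pn_sq, hx1] at hsum
  nlinarith [sq_nonneg (Real.sqrt 2 - 3/2)]

lemma not_essential_A :
    ¬ EssentialIn (Metric.sphere 0 1)
      {x ∈ (Metric.sphere 0 1 : Set Hsp) | Real.sqrt 2 / 2 ≤ PEnorm x} := by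
  refine core_not_essential {i | Even i} perm1 perm2 perm3 ?_ ?_ ?_ _ ?_
  · intro n hn; exact perm1_even n (Nat.even_iff.1 hn)
  · intro n hn; exact perm2_even n (Nat.even_iff.1 hn)
  · intro n hn; exact perm3_even n (Nat.even_iff.1 hn)
  · intro a ha
    rw [← PEnorm_eq_Pn]
    exact ha.2

lemma odd_lower (a : Hsp) (ha : ‖a‖ = 1) (h : PEnorm a ≤ Real.sqrt 2 / 2) :
    Real.sqrt 2 / 2 ≤ Pn {i | ¬ Even i} a := by
  have hsplit : PnSq {i | Even i} a + PnSq {i | ¬ Even i} a = 1 := by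
    rw [show (1:ℝ) = ‖a‖^2 by rw [ha]; norm_num, norm_sq_eq, PnSq, PnSq,
      ← Summable.tsum_add (ind_summable _ a) (ind_summable _ a)]
    refine tsum_congr fun i => ?_
    by_cases hi : Even i <;> simp [Set.indicator_apply, hi]
  obtain ⟨hs2, hs0⟩ := sqrt2_facts
  have hE : PnSq {i | Even i} a ≤ 1/2 := by
    have hpe : (PEnorm a)^2 = PnSq {i | Even i} a := by
      rw [PEnorm_eq_Pn, Pn_sq]
    have hpe0 : 0 ≤ PEnorm a := by rw [PEnorm_eq_Pn]; exact Pn_nonneg _ _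
    nlinarith
  have hO : 1/2 ≤ PnSq {i | ¬ Even i} a := by linarith
  rw [Pn]
  rw [Real.le_sqrt (by positivity) (PnSq_nonneg _ _)]
  nlinarith

lemma not_essential_B :
    ¬ EssentialIn (Metric.sphere 0 1)
      {x ∈ (Metric.sphere 0 1 : Set Hsp) | PEnorm x ≤ Real.sqrt 2 / 2} := by
  refine core_not_essential {i | ¬ Even i} (swPerm.trans perm1) (swPerm.trans perm2)
    (swPerm.trans perm3) ?_ ?_ ?_ _ ?_
  · intro n hn
    exact perm1_even _ (swPerm_odd n (fun h => hn (Nat.even_iff.2 h)))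
  · intro n hn
    exact perm2_even _ (swPerm_odd n (fun h => hn (Nat.even_iff.2 h)))
  · intro n hn
    exact perm3_even _ (swPerm_odd n (fun h => hn (Nat.even_iff.2 h)))
  · intro a ha
    exact odd_lower a (by simpa using mem_sphere_zero_iff_norm.1 ha.1) ha.2

end AuxDevelopment

/-- The unit sphere of `ℓ₂` with the action of the unitary group does not have the
concentration property: the sets `A = {x : ‖P_E x‖ ≥ √2/2}` and
`B = {x : ‖P_E x‖ ≤ √2/2}` cover the sphere but neither is essential. -/
theorem sphere_not_concentration :
    let S : Set (lp (fun _ : ℕ => ℝ) 2) := Metric.sphere 0 1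
    let A : Set (lp (fun _ : ℕ => ℝ) 2) := {x ∈ S | Real.sqrt 2 / 2 ≤ PEnorm x}
    let B : Set (lp (fun _ : ℕ => ℝ) 2) := {x ∈ S | PEnorm x ≤ Real.sqrt 2 / 2}
    A ∪ B = S ∧ ¬ EssentialIn S A ∧ ¬ EssentialIn S B := by
  intro S A B
  refine ⟨?_, not_essential_A, not_essential_B⟩
  ext x
  constructor
  · rintro (⟨hx, -⟩ | ⟨hx, -⟩) <;> exact hx
  · intro hx
    rcases le_total (PEnorm x) (Real.sqrt 2 / 2) with h | h
    · exact Or.inr ⟨hx, h⟩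
    · exact Or.inl ⟨hx, h⟩
end

section
/- The topological group S_∞ of all permutations of ℤ with the topology of pointwise convergence is not extremely amenable. Specifically, for any right-invariant metric d on S_∞ generating this topology, partition S_∞ into A = {σ : σ⁻¹(0) < σ⁻¹(1)} and B = S_∞ \ A; then neither A nor B is essential for the left-translation action, witnessed by the pair of elements {e, τ} where τ is the transposition of 0 and 1. -/
/-!
A right-invariant metric compatible with the pointwise topology has some `ε > 0` such that
`ε`-close permutations `x, y` differ by an element `x * y⁻¹` of the pointwise stabilizer of `0`
and `1`, so `x⁻¹` and `y⁻¹` agree at `0` and `1`. Hence `A` and `B`, which only depend on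
`σ⁻¹ 0` and `σ⁻¹ 1`, are unchanged by `ε`-thickening, while the transposition `τ` exchanges
them. So each `ε`-thickened piece is disjoint from its `τ`-translate.
-/

open Metric Pointwise Topology

theorem exists_pos_forall_dist_lt_mul_inv_mem {G : Type*} [Group G] [PseudoMetricSpace G]
    (hinv : ∀ x y a : G, dist (x * a) (y * a) = dist x y) {U : Set G} (hU : U ∈ 𝓝 (1 : G)) :
    ∃ ε > 0, ∀ x y : G, dist x y < ε → x * y⁻¹ ∈ U := by
  obtain ⟨ε, hε, hball⟩ := Metric.mem_nhds_iff.mp hU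
  refine ⟨ε, hε, fun x y hxy => hball ?_⟩
  rwa [mem_ball, ← hinv _ _ y, inv_mul_cancel_right, one_mul]

theorem thickening_preimage_subset {X β : Type*} [PseudoMetricSpace X] {f : X → β} {ε : ℝ}
    (hf : ∀ x y, dist x y < ε → f x = f y) (T : Set β) :
    thickening ε (f ⁻¹' T) ⊆ f ⁻¹' T := by
  intro x hx
  obtain ⟨y, hy, hxy⟩ := mem_thickening_iff.mp hx
  rwa [Set.mem_preimage, hf x y hxy]

theorem thickening_inter_smul_thickening_eq_empty {G X : Type*} [Group G] [MulAction G X]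
    [PseudoMetricSpace X] {S : Set X} {ε : ℝ} {g : G} (hS : thickening ε S ⊆ S)
    (hg : g • S = Sᶜ) : thickening ε S ∩ g • thickening ε S = ∅ :=
  Set.subset_empty_iff.mp <| calc
    thickening ε S ∩ g • thickening ε S ⊆ S ∩ g • S :=
      Set.inter_subset_inter hS (Set.smul_set_mono hS)
    _ = ∅ := by rw [hg, Set.inter_compl_self]

namespace Equiv.Perm

variable {α : Type*}

theorem isOpen_setOf_forall_mem_apply_eq [TopologicalSpace α] [DiscreteTopology α]
    [TopologicalSpace (Perm α)] (hc : Continuous fun σ : Perm α => (σ : α → α)) (s : Finset α) :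
    IsOpen {σ : Perm α | ∀ a ∈ s, σ a = a} := by
  simp only [Set.ofPred_forall]
  exact isOpen_biInter_finset fun a _ =>
    isOpen_discrete {a} |>.preimage ((continuous_apply a).comp hc)

theorem exists_pos_forall_dist_lt_symm_apply_eq [TopologicalSpace α] [DiscreteTopology α]
    [PseudoMetricSpace (Perm α)] (hinv : ∀ x y a : Perm α, dist (x * a) (y * a) = dist x y)
    (hc : Continuous fun σ : Perm α => (σ : α → α)) (s : Finset α) :
    ∃ ε > 0, ∀ x y : Perm α, dist x y < ε → ∀ a ∈ s, x.symm a = y.symm a := by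
  obtain ⟨ε, hε, hclose⟩ := exists_pos_forall_dist_lt_mul_inv_mem hinv
    ((isOpen_setOf_forall_mem_apply_eq hc s).mem_nhds fun _ _ => rfl)
  refine ⟨ε, hε, fun x y hxy a ha => ?_⟩
  rw [symm_apply_eq]
  exact (hclose x y hxy a ha).symm

theorem swap_smul_setOf_symm_lt [LinearOrder α] {a b : α} (hab : a ≠ b) :
    swap a b • {σ : Perm α | σ.symm a < σ.symm b} = {σ : Perm α | σ.symm a < σ.symm b}ᶜ := by
  ext σ
  have hswap : ∀ c, (swap a b * σ).symm c = σ.symm (swap a b c) := fun _ => rfl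
  have hne : σ.symm a ≠ σ.symm b := σ.symm.injective.ne hab
  simp only [Set.mem_smul_set_iff_inv_smul_mem, swap_inv, smul_eq_mul, Set.mem_ofPred_eq,
    Set.mem_compl_iff, not_lt, hswap, swap_apply_left, swap_apply_right]
  exact ⟨le_of_lt, fun h => h.lt_of_ne hne.symm⟩

end Equiv.Perm

/-- `S_∞`, the group of all permutations of `ℤ` with the topology of pointwise
convergence, does not have the concentration property for its action on itself by
left translations with respect to any compatible right-invariant metric: partitioning
`S_∞` into `A = {σ : σ⁻¹(0) < σ⁻¹(1)}` and its complement `B`, neither `A` nor `B`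
is essential, as witnessed by the pair `{e, τ}` with `τ` the transposition of `0`
and `1`: some `ε`-neighbourhood of each piece is disjoint from its `τ`-translate. -/
theorem sInfty_not_concentration (m : MetricSpace (Equiv.Perm ℤ))
    (hinv : ∀ x y a : Equiv.Perm ℤ, m.toDist.dist (x * a) (y * a) = m.toDist.dist x y)
    (htop : m.toUniformSpace.toTopologicalSpace =
      TopologicalSpace.induced (fun σ : Equiv.Perm ℤ => (σ : ℤ → ℤ)) inferInstance) :
    letI := m
    let τ : Equiv.Perm ℤ := Equiv.swap 0 1
    let A : Set (Equiv.Perm ℤ) := {σ | σ.symm 0 < σ.symm 1}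
    let B : Set (Equiv.Perm ℤ) := Aᶜ
    ∃ ε > (0 : ℝ),
      thickening ε A ∩ τ • thickening ε A = ∅ ∧
      thickening ε B ∩ τ • thickening ε B = ∅ := by
  let := m
  intro τ A B
  have hc : Continuous fun σ : Equiv.Perm ℤ => (σ : ℤ → ℤ) :=
    continuous_iff_le_induced.mpr htop.le
  obtain ⟨ε, hε, hclose⟩ := Equiv.Perm.exists_pos_forall_dist_lt_symm_apply_eq hinv hc {0, 1}
  let f : Equiv.Perm ℤ → ℤ × ℤ := fun σ => (σ.symm 0, σ.symm 1)
  have hf : ∀ x y, dist x y < ε → f x = f y := fun x y hxy =>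
    Prod.ext (hclose x y hxy 0 (by simp)) (hclose x y hxy 1 (by simp))
  have hτA : τ • A = Aᶜ := Equiv.Perm.swap_smul_setOf_symm_lt zero_ne_one
  have hτB : τ • B = Bᶜ := by rw [Set.smul_set_compl, hτA]
  exact ⟨ε, hε,
    thickening_inter_smul_thickening_eq_empty (thickening_preimage_subset hf {p | p.1 < p.2}) hτA,
    thickening_inter_smul_thickening_eq_empty (thickening_preimage_subset hf {p | p.1 < p.2}ᶜ) hτB⟩
end

section
/- A topological group G is extremely amenable if and only if for every finite collection g_1, …, g_n ∈ G, every bounded right-uniformly-continuous function f : G → ℝ^N, and every ε > 0, there exists h ∈ G such that |f(h) − f(g_i h)| < ε for each i = 1, …, n. -/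
open Filter

/-- A topological group is extremely amenable if every continuous action on a
nonempty compact Hausdorff space has a fixed point. -/
def ExtremelyAmenable (G : Type*) [Group G] [TopologicalSpace G] : Prop :=
  ∀ (Y : Type) [TopologicalSpace Y] [CompactSpace Y] [T2Space Y] [Nonempty Y]
    (a : G → Y → Y),
    (∀ y : Y, a 1 y = y) →
    (∀ (g h : G) (y : Y), a (g * h) y = a g (a h y)) →
    Continuous (fun p : G × Y => a p.1 p.2) →
    ∃ y : Y, ∀ g : G, a g y = y

lemma eucl_coord_le {N : ℕ} (w : EuclideanSpace ℝ (Fin N)) (j : Fin N) : |w j| ≤ ‖w‖ := by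
  rw [EuclideanSpace.norm_eq]
  have h1 : |w j| = Real.sqrt (‖w j‖ ^ 2) := by
    rw [Real.sqrt_sq_eq_abs]; simp
  rw [h1]
  apply Real.sqrt_le_sqrt
  exact Finset.single_le_sum (f := fun i => ‖w i‖ ^ 2) (fun i _ => by positivity) (Finset.mem_univ j)

section bwd
variable {G : Type} [Group G] [TopologicalSpace G] [IsTopologicalGroup G]
variable {Y : Type} [TopologicalSpace Y] [CompactSpace Y] [T2Space Y] [Nonempty Y]

lemma key_lemma
    (H : ∀ (n N : ℕ) (g : Fin n → G) (f : G → EuclideanSpace ℝ (Fin N)),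
        (∃ C : ℝ, ∀ x : G, ‖f x‖ ≤ C) →
        (∀ ε > (0 : ℝ), ∃ V ∈ nhds (1 : G), ∀ x y : G, x * y⁻¹ ∈ V → ‖f x - f y‖ < ε) →
        ∀ ε > (0 : ℝ), ∃ h : G, ∀ i : Fin n, ‖f h - f (g i * h)‖ < ε)
    (a : G → Y → Y)
    (h1 : ∀ y : Y, a 1 y = y)
    (hmul : ∀ (g h : G) (y : Y), a (g * h) y = a g (a h y))
    (hcont : Continuous (fun p : G × Y => a p.1 p.2))
    (n N : ℕ) (g : Fin n → G) (φ : Fin N → C(Y, ℝ)) {ε : ℝ} (hε : 0 < ε) :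
    ∃ y : Y, ∀ i j, |φ j (a (g i) y) - φ j y| < ε := by
  obtain ⟨y₀⟩ := ‹Nonempty Y›
  set E := EuclideanSpace ℝ (Fin N)
  let Ψ : Y → E := fun z => WithLp.toLp 2 (fun j => φ j z : Fin N → ℝ)
  have hΨ : Continuous Ψ := by
    refine (PiLp.continuous_toLp (p := 2) (β := fun _ : Fin N => ℝ)).comp ?_
    apply continuous_pi
    intro j
    exact (φ j).continuous
  let f : G → E := fun h => Ψ (a h y₀)
  have haG : ∀ g' : G, Continuous (a g') := fun g' =>
    hcont.comp (continuous_const.prodMk continuous_id)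
  have hfc : Continuous f := hΨ.comp (hcont.comp (continuous_id.prodMk continuous_const))
  -- boundedness
  have hbd : ∃ C : ℝ, ∀ x : G, ‖f x‖ ≤ C := by
    obtain ⟨C, hC⟩ := (isCompact_univ : IsCompact (Set.univ : Set Y)).exists_bound_of_continuousOn
      hΨ.continuousOn
    exact ⟨C, fun x => hC _ (Set.mem_univ _)⟩
  -- RUC
  have hruc : ∀ δ > (0 : ℝ), ∃ V ∈ nhds (1 : G), ∀ x y : G, x * y⁻¹ ∈ V → ‖f x - f y‖ < δ := by
    intro δ hδ
    let F : C(G × Y, E) :=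
      ⟨fun p => WithLp.toLp 2 (fun j => φ j (a p.1 p.2) - φ j p.2 : Fin N → ℝ), by
        refine (PiLp.continuous_toLp (p := 2) (β := fun _ : Fin N => ℝ)).comp ?_
        apply continuous_pi
        intro j
        exact ((φ j).continuous.comp hcont).sub ((φ j).continuous.comp continuous_snd)⟩
    let Fc : C(G, C(Y, E)) := F.curry
    have hFc1 : Fc 1 = 0 := by
      ext z j
      simp only [Fc, F, ContinuousMap.curry_apply, ContinuousMap.coe_mk, h1, sub_self,
        ContinuousMap.zero_apply]
      rfl
    have hV : {v : G | dist (Fc v) (Fc 1) < δ} ∈ nhds (1 : G) := by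
      have : Continuous fun v : G => dist (Fc v) (Fc 1) :=
        (Fc.continuous.dist continuous_const)
      have ho : IsOpen {v : G | dist (Fc v) (Fc 1) < δ} := isOpen_lt this continuous_const
      exact ho.mem_nhds (by simpa using hδ)
    refine ⟨_, hV, ?_⟩
    intro x y hxy
    have heq : f x - f y = Fc (x * y⁻¹) (a y y₀) := by
      ext j
      have : a (x * y⁻¹) (a y y₀) = a x y₀ := by
        rw [← hmul, inv_mul_cancel_right]
      simp only [Fc, F, ContinuousMap.curry_apply, ContinuousMap.coe_mk, this]
      rfl
    have hle := ContinuousMap.dist_apply_le_dist (f := Fc (x * y⁻¹)) (g := Fc 1) (a y y₀)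
    have hxy' : dist (Fc (x * y⁻¹)) (Fc 1) < δ := hxy
    rw [hFc1, ContinuousMap.zero_apply, dist_zero_right, ← heq] at hle
    rw [hFc1] at hxy'
    exact lt_of_le_of_lt hle hxy'
  obtain ⟨h, hh⟩ := H n N g f hbd hruc ε hε
  refine ⟨a h y₀, ?_⟩
  intro i j
  have h2 : φ j (a (g i) (a h y₀)) = f (g i * h) j := by
    rw [← hmul]
  have h3 : φ j (a h y₀) = f h j := rfl
  rw [h2, h3]
  have h4 : |f h j - f (g i * h) j| ≤ ‖f h - f (g i * h)‖ := by
    have := eucl_coord_le (f h - f (g i * h)) j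
    exact this
  rw [abs_sub_comm]
  exact lt_of_le_of_lt h4 (hh i)

end bwd

section bwd2
variable {G : Type} [Group G] [TopologicalSpace G] [IsTopologicalGroup G]

lemma bwd_main
    (H : ∀ (n N : ℕ) (g : Fin n → G) (f : G → EuclideanSpace ℝ (Fin N)),
        (∃ C : ℝ, ∀ x : G, ‖f x‖ ≤ C) →
        (∀ ε > (0 : ℝ), ∃ V ∈ nhds (1 : G), ∀ x y : G, x * y⁻¹ ∈ V → ‖f x - f y‖ < ε) →
        ∀ ε > (0 : ℝ), ∃ h : G, ∀ i : Fin n, ‖f h - f (g i * h)‖ < ε) :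
    ExtremelyAmenable G := by
  intro Y _ _ _ _ a h1 hmul hcont
  classical
  have haG : ∀ g' : G, Continuous (a g') := fun g' =>
    hcont.comp (continuous_const.prodMk continuous_id)
  let Z : Finset G × Finset C(Y, ℝ) × ℕ → Set Y := fun t =>
    {y | ∀ g ∈ t.1, ∀ φ ∈ t.2.1, |φ (a g y) - φ y| ≤ 1 / ((t.2.2 : ℝ) + 1)}
  have hZclosed : ∀ t, IsClosed (Z t) := by
    rintro ⟨S, T, k⟩
    have : Z (S, T, k) = ⋂ g ∈ S, ⋂ φ ∈ T, {y | |φ (a g y) - φ y| ≤ 1 / ((k : ℝ) + 1)} := by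
      ext y; simp [Z]
    rw [this]
    refine isClosed_biInter fun g _ => isClosed_biInter fun φ _ => ?_
    exact isClosed_le ((φ.continuous.comp (haG g)).sub φ.continuous).abs continuous_const
  have hZne : ∀ t, (Z t).Nonempty := by
    rintro ⟨S, T, k⟩
    have hεpos : (0 : ℝ) < 1 / ((k : ℝ) + 1) := by positivity
    obtain ⟨y, hy⟩ := key_lemma H a h1 hmul hcont S.card T.card
      (fun i => (S.equivFin.symm i : G)) (fun j => (T.equivFin.symm j : C(Y, ℝ))) hεpos
    refine ⟨y, ?_⟩
    intro g hg φ hφ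
    have := hy (S.equivFin ⟨g, hg⟩) (T.equivFin ⟨φ, hφ⟩)
    simpa using this.le
  have hdir : Directed (· ⊇ ·) Z := by
    rintro ⟨S1, T1, k1⟩ ⟨S2, T2, k2⟩
    have hle : ∀ k k' : ℕ, k ≤ k' → (1 : ℝ) / ((k' : ℝ) + 1) ≤ 1 / ((k : ℝ) + 1) := by
      intro k k' hkk
      have hc : (k : ℝ) + 1 ≤ (k' : ℝ) + 1 := by
        have : (k : ℝ) ≤ (k' : ℝ) := by exact_mod_cast hkk
        linarith
      exact one_div_le_one_div_of_le (by positivity) hc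
    refine ⟨(S1 ∪ S2, T1 ∪ T2, max k1 k2), ?_, ?_⟩
    · intro y hy g hg φ hφ
      exact le_trans (hy g (Finset.mem_union_left _ hg) φ (Finset.mem_union_left _ hφ))
        (hle _ _ (le_max_left _ _))
    · intro y hy g hg φ hφ
      exact le_trans (hy g (Finset.mem_union_right _ hg) φ (Finset.mem_union_right _ hφ))
        (hle _ _ (le_max_right _ _))
  obtain ⟨y, hy⟩ := IsCompact.nonempty_iInter_of_directed_nonempty_isCompact_isClosed Z hdir hZne
    (fun t => (hZclosed t).isCompact) hZclosed
  refine ⟨y, ?_⟩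
  intro g
  have heq : ∀ φ : C(Y, ℝ), φ (a g y) = φ y := by
    intro φ
    have hk : ∀ k : ℕ, |φ (a g y) - φ y| ≤ 1 / ((k : ℝ) + 1) := by
      intro k
      exact Set.mem_iInter.mp hy ({g}, {φ}, k) g (Finset.mem_singleton_self g) φ
        (Finset.mem_singleton_self φ)
    have h0 : |φ (a g y) - φ y| ≤ 0 :=
      ge_of_tendsto' tendsto_one_div_add_atTop_nhds_zero_nat hk
    have h0' : φ (a g y) - φ y = 0 := by
      have := le_antisymm h0 (abs_nonneg _)
      rwa [abs_eq_zero] at this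
    linarith
  by_contra hne
  obtain ⟨φ, hφ0, hφ1, -⟩ := exists_continuous_zero_one_of_isClosed
    (isClosed_singleton (x := a g y)) (isClosed_singleton (x := y))
    (by simpa [Set.disjoint_singleton] using hne)
  have hv0 := hφ0 (Set.mem_singleton _)
  have hv1 := hφ1 (Set.mem_singleton _)
  have := heq φ
  rw [hv0, hv1] at this
  norm_num at this

end bwd2

section fwd
variable {G : Type} [Group G] [TopologicalSpace G] [IsTopologicalGroup G]

lemma fwd_main (hEA : ExtremelyAmenable G) :
    ∀ (n N : ℕ) (g : Fin n → G) (f : G → EuclideanSpace ℝ (Fin N)),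
        (∃ C : ℝ, ∀ x : G, ‖f x‖ ≤ C) →
        (∀ ε > (0 : ℝ), ∃ V ∈ nhds (1 : G), ∀ x y : G, x * y⁻¹ ∈ V → ‖f x - f y‖ < ε) →
        ∀ ε > (0 : ℝ), ∃ h : G, ∀ i : Fin n, ‖f h - f (g i * h)‖ < ε := by
  intro n N g f hbd hruc ε hε
  obtain ⟨C, hC⟩ := hbd
  let E := EuclideanSpace ℝ (Fin N)
  let Φ : G → (G → E) := fun h x => f (x * h)
  let S : Set (G → E) := closure (Set.range Φ)
  -- compactness
  have hSsub : S ⊆ {u : G → E | ∀ x, u x ∈ Metric.closedBall (0 : E) C} := by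
    apply closure_minimal
    · rintro _ ⟨h, rfl⟩ x
      simpa [Metric.mem_closedBall, dist_zero_right] using hC (x * h)
    · rw [Set.setOf_forall]
      exact isClosed_iInter fun x =>
        IsClosed.preimage (continuous_apply x) Metric.isClosed_closedBall
  have hScomp : IsCompact S := by
    have hK : IsCompact {u : G → E | ∀ x, u x ∈ Metric.closedBall (0 : E) C} :=
      isCompact_pi_infinite fun x => isCompact_closedBall 0 C
    exact hK.of_isClosed_subset isClosed_closure hSsub
  -- equicontinuity
  have equi : ∀ δ > (0 : ℝ), ∃ V ∈ nhds (1 : G),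
      ∀ u ∈ S, ∀ x y : G, x * y⁻¹ ∈ V → ‖u x - u y‖ ≤ δ := by
    intro δ hδ
    obtain ⟨V, hV, hVf⟩ := hruc δ hδ
    refine ⟨V, hV, ?_⟩
    have hsub : S ⊆ {u : G → E | ∀ x y : G, x * y⁻¹ ∈ V → ‖u x - u y‖ ≤ δ} := by
      apply closure_minimal
      · rintro _ ⟨h, rfl⟩ x y hxy
        have hmem : (x * h) * (y * h)⁻¹ ∈ V := by
          have : (x * h) * (y * h)⁻¹ = x * y⁻¹ := by group
          rwa [this]
        exact (hVf _ _ hmem).le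
      · rw [Set.setOf_forall]
        refine isClosed_iInter fun x => ?_
        rw [Set.setOf_forall]
        refine isClosed_iInter fun y => ?_
        by_cases hxy : x * y⁻¹ ∈ V
        · have : {u : G → E | x * y⁻¹ ∈ V → ‖u x - u y‖ ≤ δ}
              = {u : G → E | ‖u x - u y‖ ≤ δ} := by
            ext u; simp [hxy]
          rw [this]
          exact isClosed_le (((continuous_apply x).sub (continuous_apply y)).norm)
            continuous_const
        · have : {u : G → E | x * y⁻¹ ∈ V → ‖u x - u y‖ ≤ δ} = Set.univ := by
            ext u; simp [hxy]
          rw [this]; exact isClosed_univ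
    exact fun u hu => hsub hu
  -- compact Hausdorff space Y
  haveI : CompactSpace ↥S := isCompact_iff_compactSpace.mp hScomp
  haveI : Nonempty ↥S := ⟨⟨Φ 1, subset_closure ⟨1, rfl⟩⟩⟩
  -- the action
  have hmaps : ∀ g' : G, Set.MapsTo (fun (u : G → E) => fun x => u (x * g')) S S := by
    intro g'
    have hc : Continuous fun (u : G → E) => fun x => u (x * g') :=
      continuous_pi fun x => continuous_apply (x * g')
    have hm : Set.MapsTo (fun (u : G → E) => fun x => u (x * g')) (Set.range Φ) S := by
      rintro _ ⟨h, rfl⟩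
      refine subset_closure ⟨g' * h, ?_⟩
      funext x
      simp [Φ, mul_assoc]
    exact hm.closure_left hc isClosed_closure
  let act : G → ↥S → ↥S := fun g' u => ⟨fun x => u.1 (x * g'), hmaps g' u.2⟩
  have hone : ∀ u : ↥S, act 1 u = u := by
    intro u; apply Subtype.ext; funext x; simp [act]
  have hmulP : ∀ (g' h' : G) (u : ↥S), act (g' * h') u = act g' (act h' u) := by
    intro g' h' u; apply Subtype.ext; funext x; simp [act, mul_assoc]
  have hcontP : Continuous fun p : G × ↥S => act p.1 p.2 := by
    apply Continuous.subtype_mk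
    apply continuous_pi
    intro x
    refine continuous_iff_continuousAt.mpr ?_
    rintro ⟨g₀, u₀⟩
    rw [ContinuousAt, Metric.tendsto_nhds]
    intro δ hδ
    obtain ⟨V, hV, hVequi⟩ := equi (δ / 3) (by linarith)
    have hg : ∀ᶠ p : G × ↥S in nhds (g₀, u₀), (x * p.1) * (x * g₀)⁻¹ ∈ V := by
      have hcont' : Continuous fun g' : G => (x * g') * (x * g₀)⁻¹ := by
        continuity
      have h1 : (x * g₀) * (x * g₀)⁻¹ = (1 : G) := by group
      have hmem : {g' : G | (x * g') * (x * g₀)⁻¹ ∈ V} ∈ nhds g₀ :=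
        hcont'.continuousAt.preimage_mem_nhds (by rwa [h1])
      exact (continuous_fst.tendsto (g₀, u₀)).eventually_mem hmem
    have hu : ∀ᶠ p : G × ↥S in nhds (g₀, u₀),
        ‖(p.2 : G → E) (x * g₀) - (u₀ : G → E) (x * g₀)‖ < δ / 3 := by
      have hcont'' : Continuous fun p : G × ↥S =>
          ‖(p.2 : G → E) (x * g₀) - (u₀ : G → E) (x * g₀)‖ := by
        refine Continuous.norm (Continuous.sub ?_ continuous_const)
        exact (continuous_apply (x * g₀)).comp (continuous_subtype_val.comp continuous_snd)
      have ho : IsOpen {p : G × ↥S |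
          ‖(p.2 : G → E) (x * g₀) - (u₀ : G → E) (x * g₀)‖ < δ / 3} :=
        isOpen_lt hcont'' continuous_const
      refine ho.mem_nhds ?_
      simp only [Set.mem_setOf_eq, sub_self, norm_zero]
      linarith
    filter_upwards [hg, hu] with p hp1 hp2
    have hstep : ‖(p.2 : G → E) (x * p.1) - (p.2 : G → E) (x * g₀)‖ ≤ δ / 3 :=
      hVequi _ p.2.2 _ _ hp1
    have htri : ‖(p.2 : G → E) (x * p.1) - (u₀ : G → E) (x * g₀)‖
        ≤ ‖(p.2 : G → E) (x * p.1) - (p.2 : G → E) (x * g₀)‖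
          + ‖(p.2 : G → E) (x * g₀) - (u₀ : G → E) (x * g₀)‖ :=
      norm_sub_le_norm_sub_add_norm_sub _ _ _
    rw [dist_eq_norm]
    calc ‖(p.2 : G → E) (x * p.1) - (u₀ : G → E) (x * g₀)‖
        ≤ δ / 3 + δ / 3 := le_trans htri (by linarith)
      _ < δ := by linarith
  obtain ⟨y, hy⟩ := hEA ↥S act hone hmulP hcontP
  -- y is constant
  set c : E := (y : G → E) 1 with hc0
  have hconst : ∀ x : G, (y : G → E) x = c := by
    intro x
    have := congrArg Subtype.val (hy x)
    have := congrFun this 1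
    rw [hc0]
    simpa [act] using this
  -- y is in the closure, extract h
  have hymem : (y : G → E) ∈ S := y.2
  rw [mem_closure_iff] at hymem
  have ho : IsOpen ({v : G → E | ‖v 1 - c‖ < ε / 2}
      ∩ ⋂ i : Fin n, {v : G → E | ‖v (g i) - c‖ < ε / 2}) := by
    refine IsOpen.inter ?_ ?_
    · exact isOpen_lt (((continuous_apply (1 : G)).sub continuous_const).norm) continuous_const
    · refine isOpen_iInter_of_finite fun i => ?_
      exact isOpen_lt (((continuous_apply (g i)).sub continuous_const).norm) continuous_const
  have hmem : (y : G → E) ∈ ({v : G → E | ‖v 1 - c‖ < ε / 2}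
      ∩ ⋂ i : Fin n, {v : G → E | ‖v (g i) - c‖ < ε / 2}) := by
    constructor
    · simp only [Set.mem_setOf_eq, hconst 1, sub_self, norm_zero]
      linarith
    · refine Set.mem_iInter.mpr fun i => ?_
      simp only [Set.mem_setOf_eq, hconst (g i), sub_self, norm_zero]
      linarith
  obtain ⟨u, huo, hu'⟩ := hymem _ ho hmem
  · obtain ⟨hu1, hu2⟩ := huo
    obtain ⟨h, rfl⟩ := hu'
    refine ⟨h, ?_⟩
    intro i
    have hi : ‖Φ h (g i) - c‖ < ε / 2 := by
      have := Set.mem_iInter.mp hu2 i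
      exact this
    have h1' : Φ h 1 = f h := by simp [Φ]
    have h2' : Φ h (g i) = f (g i * h) := by simp [Φ]
    rw [← h1', ← h2']
    calc ‖Φ h 1 - Φ h (g i)‖ ≤ ‖Φ h 1 - c‖ + ‖c - Φ h (g i)‖ :=
          norm_sub_le_norm_sub_add_norm_sub _ _ _
      _ < ε / 2 + ε / 2 := add_lt_add hu1 (by rw [norm_sub_rev]; exact hi)
      _ = ε := by ring

end fwd

/-- A topological group `G` is extremely amenable iff for every finite collection
`g 1, …, g n ∈ G`, every bounded right-uniformly-continuous `f : G → ℝ^N`, and every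
`ε > 0`, there is `h ∈ G` with `‖f(h) − f(gᵢ h)‖ < ε` for all `i`. -/
theorem extremelyAmenable_iff_oscillation (G : Type) [Group G] [TopologicalSpace G]
    [IsTopologicalGroup G] :
    ExtremelyAmenable G ↔
      ∀ (n N : ℕ) (g : Fin n → G) (f : G → EuclideanSpace ℝ (Fin N)),
        (∃ C : ℝ, ∀ x : G, ‖f x‖ ≤ C) →
        (∀ ε > (0 : ℝ), ∃ V ∈ nhds (1 : G), ∀ x y : G, x * y⁻¹ ∈ V → ‖f x - f y‖ < ε) →
        ∀ ε > (0 : ℝ), ∃ h : G, ∀ i : Fin n, ‖f h - f (g i * h)‖ < ε :=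
  ⟨fun hEA => fwd_main hEA, fun H => bwd_main H⟩
end

section
/- The action of S_∞ on the space LO of all linear orders on ℤ (a compact subspace of {0,1}^{ℤ×ℤ}) given by (x <_{σ·≺} y) ⟺ (σ⁻¹x ≺ σ⁻¹y) is continuous and minimal: the orbit of every linear order is dense in LO. -/
/-- `f : ℤ → ℤ → Bool` codes a (strict) linear order on `ℤ`. -/
def IsLO (f : ℤ → ℤ → Bool) : Prop :=
  (∀ x, f x x = false) ∧
  (∀ x y z, f x y = true → f y z = true → f x z = true) ∧
  (∀ x y, x ≠ y → (f x y = true ∨ f y x = true)) ∧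
  (∀ x y, f x y = true → f y x = false)

lemma exists_fmax (f : ℤ → ℤ → Bool) (h : IsLO f) (T : Finset ℤ) :
    T.Nonempty → ∃ m ∈ T, ∀ x ∈ T, x ≠ m → f x m = true := by
  classical
  induction T using Finset.induction_on with
  | empty => intro h'; simp at h'
  | @insert a T ha ih =>
    intro _
    rcases T.eq_empty_or_nonempty with rfl | hne
    · exact ⟨a, Finset.mem_insert_self a _, by simp⟩
    · obtain ⟨m, hm, hmax⟩ := ih hne
      by_cases hfam : f a m = true
      · refine ⟨m, Finset.mem_insert_of_mem hm, ?_⟩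
        intro x hx hxm
        rcases Finset.mem_insert.mp hx with rfl | hxT
        · exact hfam
        · exact hmax x hxT hxm
      · have ham : a ≠ m := fun h' => ha (h' ▸ hm)
        have hma : f m a = true := by
          rcases h.2.2.1 a m ham with h' | h'
          · exact absurd h' hfam
          · exact h'
        refine ⟨a, Finset.mem_insert_self a _, ?_⟩
        intro x hx hxa
        rcases Finset.mem_insert.mp hx with rfl | hxT
        · exact absurd rfl hxa
        · by_cases hxm : x = m
          · exact hxm ▸ hma
          · exact h.2.1 x m a (hmax x hxT hxm) hma

lemma match_aux (f g : ℤ → ℤ → Bool) (hf : IsLO f) (hg : IsLO g) :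
    ∀ (k : ℕ) (F T : Finset ℤ), F.card = k → T.card = k →
    ∃ φ : ℤ → ℤ, (∀ x ∈ F, φ x ∈ T) ∧ Set.InjOn φ F ∧
      ∀ x ∈ F, ∀ y ∈ F, g x y = true → f (φ x) (φ y) = true := by
  classical
  intro k
  induction k with
  | zero =>
    intro F T hF _
    rw [Finset.card_eq_zero] at hF
    subst hF
    exact ⟨id, by simp, by simp, by simp⟩
  | succ k ih =>
    intro F T hF hT
    have hFne : F.Nonempty := Finset.card_pos.mp (by omega)
    have hTne : T.Nonempty := Finset.card_pos.mp (by omega)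
    obtain ⟨a, haF, hamax⟩ := exists_fmax g hg F hFne
    obtain ⟨m, hmT, hmmax⟩ := exists_fmax f hf T hTne
    obtain ⟨φ, hmap, hinj, hord⟩ := ih (F.erase a) (T.erase m)
      (by rw [Finset.card_erase_of_mem haF, hF]; rfl)
      (by rw [Finset.card_erase_of_mem hmT, hT]; rfl)
    refine ⟨fun x => if x = a then m else φ x, ?_, ?_, ?_⟩
    · intro x hx
      by_cases hxa : x = a
      · simpa [hxa] using hmT
      · simp only [if_neg hxa]
        exact Finset.mem_of_mem_erase (hmap x (Finset.mem_erase.mpr ⟨hxa, hx⟩))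
    · intro x hx y hy hxy
      simp only [Finset.mem_coe] at hx hy
      by_cases hxa : x = a <;> by_cases hya : y = a
      · rw [hxa, hya]
      · exfalso
        simp only [if_pos hxa, if_neg hya] at hxy
        have := hmap y (Finset.mem_erase.mpr ⟨hya, hy⟩)
        rw [← hxy] at this
        exact (Finset.mem_erase.mp this).1 rfl
      · exfalso
        simp only [if_neg hxa, if_pos hya] at hxy
        have := hmap x (Finset.mem_erase.mpr ⟨hxa, hx⟩)
        rw [hxy] at this
        exact (Finset.mem_erase.mp this).1 rfl
      · simp only [if_neg hxa, if_neg hya] at hxy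
        exact hinj (Finset.mem_coe.mpr (Finset.mem_erase.mpr ⟨hxa, hx⟩))
          (Finset.mem_coe.mpr (Finset.mem_erase.mpr ⟨hya, hy⟩)) hxy
    · intro x hx y hy hgxy
      by_cases hxa : x = a <;> by_cases hya : y = a
      · exfalso
        rw [hxa, hya, hg.1 a] at hgxy
        exact Bool.false_ne_true hgxy
      · exfalso
        have h1 : g y a = true := hamax y hy hya
        have h2 : g a y = false := hg.2.2.2 y a h1
        rw [hxa, h2] at hgxy
        exact Bool.false_ne_true hgxy
      · simp only [if_neg hxa, if_pos hya]
        have hx' := hmap x (Finset.mem_erase.mpr ⟨hxa, hx⟩)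
        exact hmmax (φ x) (Finset.mem_of_mem_erase hx') (Finset.mem_erase.mp hx').1
      · simp only [if_neg hxa, if_neg hya]
        exact hord x (Finset.mem_erase.mpr ⟨hxa, hx⟩) y (Finset.mem_erase.mpr ⟨hya, hy⟩) hgxy

lemma match_perm (f g : ℤ → ℤ → Bool) (hf : IsLO f) (hg : IsLO g) (F : Finset ℤ) :
    ∃ σ : Equiv.Perm ℤ, ∀ x ∈ F, ∀ y ∈ F, f (σ.symm x) (σ.symm y) = g x y := by
  classical
  obtain ⟨φ, hmap, hinj, hord⟩ := match_aux f g hf hg F.card F F rfl rfl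
  have heq : ∀ x ∈ F, ∀ y ∈ F, f (φ x) (φ y) = g x y := by
    intro x hx y hy
    cases hgxy : g x y with
    | true => exact hord x hx y hy hgxy
    | false =>
      by_cases hxy : x = y
      · rw [hxy, hf.1]
      · have : g y x = true := by
          rcases hg.2.2.1 x y hxy with h' | h'
          · rw [h'] at hgxy; exact absurd hgxy (by simp)
          · exact h'
        exact hf.2.2.2 (φ y) (φ x) (hord y hy x hx this)
  have himg : F.image φ = F := by
    apply Finset.eq_of_subset_of_card_le
    · intro y hy
      obtain ⟨x, hx, rfl⟩ := Finset.mem_image.mp hy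
      exact hmap x hx
    · rw [Finset.card_image_of_injOn hinj]
  set ψ : ℤ → ℤ := fun x => if x ∈ F then φ x else x with hψ
  have hbij : Function.Bijective ψ := by
    constructor
    · intro x y h
      by_cases hx : x ∈ F <;> by_cases hy : y ∈ F <;>
        simp only [hψ, if_pos, if_neg, hx, hy, if_true, if_false] at h
      · exact hinj (Finset.mem_coe.mpr hx) (Finset.mem_coe.mpr hy) h
      · exact absurd (h ▸ hmap x hx) hy
      · exact absurd (h ▸ hmap y hy) hx
      · exact h
    · intro y
      by_cases hy : y ∈ F
      · obtain ⟨x, hx, hxy⟩ := Finset.mem_image.mp (himg ▸ hy)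
        exact ⟨x, by simp [hψ, hx, hxy]⟩
      · exact ⟨y, by simp [hψ, hy]⟩
  refine ⟨(Equiv.ofBijective ψ hbij).symm, ?_⟩
  intro x hx y hy
  have : ∀ z ∈ F, (Equiv.ofBijective ψ hbij).symm.symm z = φ z := by
    intro z hz
    rw [Equiv.symm_symm, Equiv.ofBijective_apply]; simp only [hψ]; rw [if_pos hz]
  rw [this x hx, this y hy]
  exact heq x hx y hy

/-- The compact space `LO` of all linear orders on `ℤ`, as a subspace of
`{0,1}^(ℤ×ℤ)` (here `(ℤ → ℤ → Bool)` with the product topology). -/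
def LO : Type := {f : ℤ → ℤ → Bool // IsLO f}

instance : TopologicalSpace LO :=
  instTopologicalSpaceSubtype

/-- The action of `S_∞` on `LO` by double permutations:
`x (σ·≺) y ⟺ σ⁻¹x ≺ σ⁻¹y`. -/
def actLO (σ : Equiv.Perm ℤ) (f : LO) : LO :=
  ⟨fun x y => f.1 (σ.symm x) (σ.symm y), by
    obtain ⟨f, h1, h2, h3, h4⟩ := f
    exact ⟨fun x => h1 _, fun x y z => h2 _ _ _,
      fun x y hxy => h3 _ _ (fun h => hxy (σ.symm.injective h)),
      fun x y => h4 _ _⟩⟩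

/-- The action of `S_∞` (with the topology of pointwise convergence) on the compact
space `LO` of linear orders on `ℤ` is continuous and minimal: every orbit is dense. -/
theorem actLO_continuous_and_minimal :
    letI : TopologicalSpace (Equiv.Perm ℤ) :=
      TopologicalSpace.induced (fun σ : Equiv.Perm ℤ => (σ : ℤ → ℤ)) inferInstance
    (Continuous fun p : Equiv.Perm ℤ × LO => actLO p.1 p.2) ∧
    ∀ f : LO, Dense {g : LO | ∃ σ : Equiv.Perm ℤ, actLO σ f = g} := by

  letI : TopologicalSpace (Equiv.Perm ℤ) :=
    TopologicalSpace.induced (fun σ : Equiv.Perm ℤ => (σ : ℤ → ℤ)) inferInstance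
  constructor
  · -- Continuity
    apply Continuous.subtype_mk
    apply continuous_pi; intro x
    apply continuous_pi; intro y
    rw [continuous_discrete_rng]
    intro b
    have hset : (fun p : Equiv.Perm ℤ × LO => (p.2).1 (p.1.symm x) (p.1.symm y)) ⁻¹' {b}
        = ⋃ (a : ℤ) (c : ℤ),
          ({p : Equiv.Perm ℤ × LO | p.1 a = x} ∩ {p | p.1 c = y} ∩ {p | (p.2).1 a c = b}) := by
      ext p
      simp only [Set.mem_preimage, Set.mem_singleton_iff, Set.mem_iUnion, Set.mem_inter_iff,
        Set.mem_setOf_eq]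
      constructor
      · intro h
        exact ⟨p.1.symm x, p.1.symm y, ⟨p.1.apply_symm_apply x, p.1.apply_symm_apply y⟩, h⟩
      · rintro ⟨a, c, ⟨ha, hc⟩, h⟩
        have ha' : p.1.symm x = a := by rw [← ha, Equiv.symm_apply_apply]
        have hc' : p.1.symm y = c := by rw [← hc, Equiv.symm_apply_apply]
        rw [ha', hc']; exact h
    rw [hset]
    apply isOpen_iUnion; intro a; apply isOpen_iUnion; intro c
    have hcoe : Continuous fun σ : Equiv.Perm ℤ => (σ : ℤ → ℤ) := continuous_induced_dom
    have h1 : Continuous fun p : Equiv.Perm ℤ × LO => p.1 a :=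
      ((continuous_apply a).comp hcoe).comp continuous_fst
    have h2 : Continuous fun p : Equiv.Perm ℤ × LO => p.1 c :=
      ((continuous_apply c).comp hcoe).comp continuous_fst
    have h3 : Continuous fun p : Equiv.Perm ℤ × LO => (p.2).1 a c :=
      (continuous_apply c).comp
        ((continuous_apply a).comp (continuous_subtype_val.comp continuous_snd))
    exact ((h1.isOpen_preimage {x} (isOpen_discrete _)).inter
      (h2.isOpen_preimage {y} (isOpen_discrete _))).inter
      (h3.isOpen_preimage {b} (isOpen_discrete _))
  · -- Minimality
    intro f g
    have hch : ∀ n : ℕ, ∃ σ : Equiv.Perm ℤ,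
        ∀ x ∈ Finset.Icc (-(n:ℤ)) n, ∀ y ∈ Finset.Icc (-(n:ℤ)) n,
          f.1 (σ.symm x) (σ.symm y) = g.1 x y :=
      fun n => match_perm f.1 g.1 f.2 g.2 _
    choose σ hσ using hch
    apply mem_closure_of_tendsto (f := fun n : ℕ => actLO (σ n) f) (b := Filter.atTop)
    · show Filter.Tendsto (fun n : ℕ => (actLO (σ n) f : {h : ℤ → ℤ → Bool // IsLO h}))
        Filter.atTop (nhds (g : {h : ℤ → ℤ → Bool // IsLO h}))
      refine tendsto_subtype_rng.mpr (tendsto_pi_nhds.mpr ?_)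
      intro x
      rw [tendsto_pi_nhds]
      intro y
      apply tendsto_nhds_of_eventually_eq
      filter_upwards [Filter.eventually_ge_atTop (max x.natAbs y.natAbs)] with n hn
      have hx : x ∈ Finset.Icc (-(n:ℤ)) n := by rw [Finset.mem_Icc]; omega
      have hy : y ∈ Finset.Icc (-(n:ℤ)) n := by rw [Finset.mem_Icc]; omega
      exact hσ n x hx y hy
    · exact Filter.Eventually.of_forall fun n => ⟨σ n, rfl⟩
end
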